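/- arXiv:1710.01277 — 2 statements merged into one kernel-verified Lean document; each statement's English description precedes it below -/
import Mathlib

section
/- Let (A, m) be an F-finite Noetherian local ring of characteristic p, and I_e(A) its e-th Frobenius degeneracy ideal. Then for all e ≥ 1: (a) the Frobenius power satisfies I_e(A)^{[p]} ⊆ I_{e+1}(A), where I^{[p]} = ideal generated by p-th powers of elements of I; and (b) for every φ ∈ Hom_A(F_* A, A), φ(F_* I_{e+1}(A)) ⊆ I_e(A). -/
/-- `FrobTwist A p e` is `A` viewed as an algebra over itself via the `e`-th iterate of the
Frobenius endomorphism, i.e. the `A`-module `F^e_* A` of the `p^e`-th roots `A^{1/p^e}`. -/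
def FrobTwist (A : Type*) (_p _e : ℕ) : Type _ := A

instance FrobTwist.instCommRing {A : Type*} [CommRing A] {p e : ℕ} :
    CommRing (FrobTwist A p e) := inferInstanceAs (CommRing A)

instance FrobTwist.instIsDomain {A : Type*} [CommRing A] [IsDomain A] {p e : ℕ} :
    IsDomain (FrobTwist A p e) := inferInstanceAs (IsDomain A)

instance FrobTwist.instField {A : Type*} [Field A] {p e : ℕ} :
    Field (FrobTwist A p e) := inferInstanceAs (Field A)

/-- The identity of `A`, as a ring isomorphism `A ≃+* FrobTwist A p e`. -/
def FrobTwist.of {A : Type*} [CommRing A] {p e : ℕ} : A ≃+* FrobTwist A p e :=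
  RingEquiv.refl A

noncomputable instance FrobTwist.instAlgebra {A : Type*} [CommRing A] {p e : ℕ}
    [ExpChar A p] : Algebra A (FrobTwist A p e) :=
  ((FrobTwist.of (A := A) (p := p) (e := e)).toRingHom.comp (iterateFrobenius A p e)).toAlgebra

/-- A Noetherian ring of prime characteristic `p` is `F-finite` if it is module-finite over
itself via Frobenius. -/
abbrev FFinite (A : Type*) [CommRing A] (p : ℕ) [ExpChar A p] : Prop :=
  Module.Finite A (FrobTwist A p 1)

/-- The residue field `k(Q)` of a commutative ring at a prime `Q`. -/
noncomputable def resField (A : Type*) [CommRing A] (Q : Ideal A) [Q.IsPrime] : Type _ :=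
  IsLocalRing.ResidueField (Localization.AtPrime Q)

noncomputable instance resField.instField {A : Type*} [CommRing A] {Q : Ideal A} [Q.IsPrime] :
    Field (resField A Q) :=
  inferInstanceAs (Field (IsLocalRing.ResidueField (Localization.AtPrime Q)))

noncomputable instance resField.instAlgebra {A : Type*} [CommRing A] {Q : Ideal A}
    [Q.IsPrime] : Algebra A (resField A Q) :=
  ((IsLocalRing.residue (Localization.AtPrime Q)).comp
    (algebraMap A (Localization.AtPrime Q))).toAlgebra

instance resField.instCharP {A : Type*} [CommRing A] {Q : Ideal A} [Q.IsPrime]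
    (p : ℕ) [Fact p.Prime] [CharP A p] : CharP (resField A Q) p := by
  refine (CharP.charP_iff_prime_eq_zero Fact.out).mpr ?_
  have h := map_natCast (algebraMap A (resField A Q)) p
  rw [CharP.cast_eq_zero, map_zero] at h
  exact h.symm

/-- `[k : k^{p^e}] = [k^{1/p^e} : k]`, the `p^e`-degree of a field `k` of characteristic `p`:
the rank of `k` as a module over itself via the `e`-th iterate of Frobenius. -/
noncomputable def pDegree (k : Type*) [Field k] (p e : ℕ) [ExpChar k p] : ℕ :=
  Module.finrank k (FrobTwist k p e)

/-- The `p^e`-degree of the residue field of `A` at the prime `Q`. -/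
noncomputable def residuePDegree (A : Type*) [CommRing A] (p e : ℕ) [Fact p.Prime]
    [CharP A p] (Q : Ideal A) [Q.IsPrime] : ℕ :=
  letI : ExpChar (resField A Q) p := ExpChar.prime Fact.out
  pDegree (resField A Q) p e

/-- The height of a prime ideal `Q`, as a natural number. -/
noncomputable def primeHeight {A : Type*} [CommRing A] (Q : Ideal A) [Q.IsPrime] : ℕ :=
  (Order.height (⟨Q, ‹Q.IsPrime›⟩ : PrimeSpectrum A)).toNat

open IsLocalRing in
/-- The `e`-th Frobenius degeneracy ideal
`I_e(A) = {a ∈ A : φ(F^e_* a) ∈ m for all φ : F^e_* A → A}`. -/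
def frobDegeneracyIdeal (A : Type*) [CommRing A] [IsLocalRing A] (p e : ℕ)
    [ExpChar A p] : Ideal A where
  carrier := {a : A | ∀ φ : FrobTwist A p e →ₗ[A] A, φ (FrobTwist.of a) ∈ maximalIdeal A}
  zero_mem' := by
    intro φ
    simp
  add_mem' := by
    intro a b ha hb φ
    have h1 : (FrobTwist.of (a + b) : FrobTwist A p e) =
        FrobTwist.of a + FrobTwist.of b := rfl
    rw [h1, map_add]
    exact (maximalIdeal A).add_mem (ha φ) (hb φ)
  smul_mem' := by
    intro c a ha
    intro φ
    have h := ha (φ.comp (LinearMap.mulLeft A (FrobTwist.of c)))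
    have hc : (FrobTwist.of (c • a) : FrobTwist A p e) =
        FrobTwist.of c * FrobTwist.of a := rfl
    rw [hc]
    simpa [LinearMap.mulLeft_apply] using h

section MyAux

variable {A : Type*} [CommRing A] {p : ℕ} [Fact p.Prime] [CharP A p] [ExpChar A p]

lemma FrobTwist.smul_eq (e : ℕ) (c : A) (x : FrobTwist A p e) :
    c • x = FrobTwist.of (c ^ p ^ e * (FrobTwist.of (p := p) (e := e)).symm x) := by
  rw [Algebra.smul_def, RingHom.algebraMap_toAlgebra]
  simp only [RingHom.comp_apply, iterateFrobenius_def]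
  rfl

/-- Given `ψ : F^{e+1}_* A → A`, the map `x ↦ ψ(x^p)` is `A`-linear `F^e_* A → A`. -/
noncomputable def FrobTwist.postFrob (e : ℕ) (ψ : FrobTwist A p (e + 1) →ₗ[A] A) :
    FrobTwist A p e →ₗ[A] A where
  toFun x := ψ (FrobTwist.of (frobenius A p ((FrobTwist.of (p := p) (e := e)).symm x)))
  map_add' x y := by
    simp only [map_add]
  map_smul' c x := by
    simp only [RingHom.id_apply]
    rw [FrobTwist.smul_eq, RingEquiv.symm_apply_apply, map_mul, map_mul]
    have h1 : (FrobTwist.of (frobenius A p (c ^ p ^ e)) :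
        FrobTwist A p (e + 1)) * FrobTwist.of (frobenius A p ((FrobTwist.of (p := p) (e := e)).symm x)) =
        c • FrobTwist.of (frobenius A p ((FrobTwist.of (p := p) (e := e)).symm x)) := by
      rw [FrobTwist.smul_eq (e + 1), RingEquiv.symm_apply_apply, ← map_mul]
      congr 1
      rw [frobenius_def, ← pow_mul, ← pow_succ]
    rw [h1, map_smul]

/-- Given `φ : F_* A → A` and `ψ : F^e_* A → A`, the map `x ↦ ψ(φ(x))` is `A`-linear
`F^{e+1}_* A → A`. -/
noncomputable def FrobTwist.compTwist (e : ℕ) (φ : FrobTwist A p 1 →ₗ[A] A)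
    (ψ : FrobTwist A p e →ₗ[A] A) : FrobTwist A p (e + 1) →ₗ[A] A where
  toFun x := ψ (FrobTwist.of (φ (FrobTwist.of ((FrobTwist.of (p := p) (e := e + 1)).symm x))))
  map_add' x y := by
    simp only [map_add]
  map_smul' c x := by
    simp only [RingHom.id_apply]
    rw [FrobTwist.smul_eq, RingEquiv.symm_apply_apply]
    have h1 : (FrobTwist.of (c ^ p ^ (e + 1) * (FrobTwist.of (p := p) (e := e + 1)).symm x) :
        FrobTwist A p 1) =
        (c ^ p ^ e) • FrobTwist.of ((FrobTwist.of (p := p) (e := e + 1)).symm x) := by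
      rw [FrobTwist.smul_eq 1, RingEquiv.symm_apply_apply]
      congr 2
      rw [pow_one, ← pow_mul, ← pow_succ]
    rw [h1, map_smul]
    have h2 : (FrobTwist.of ((c ^ p ^ e) • φ (FrobTwist.of ((FrobTwist.of (p := p) (e := e + 1)).symm x))) :
        FrobTwist A p e) =
        c • FrobTwist.of (φ (FrobTwist.of ((FrobTwist.of (p := p) (e := e + 1)).symm x))) := by
      rw [FrobTwist.smul_eq e, RingEquiv.symm_apply_apply]
      rfl
    rw [h2, map_smul]

end MyAux

/-- For `(A,m)` F-finite Noetherian local of characteristic `p` and `e ≥ 1`: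
(a) `I_e(A)^{[p]} ⊆ I_{e+1}(A)`, and (b) `φ(F_* I_{e+1}(A)) ⊆ I_e(A)` for every
`φ ∈ Hom_A(F_* A, A)`. -/
theorem frobenius_degeneracy_ideal_transforms
    (p : ℕ) [Fact p.Prime]
    (A : Type*) [CommRing A] [IsNoetherianRing A] [IsLocalRing A] [CharP A p]
    [ExpChar A p] [FFinite A p]
    (e : ℕ) (he : 1 ≤ e) :
    (Ideal.span ((fun x : A => x ^ p) '' (frobDegeneracyIdeal A p e : Set A)) ≤
        frobDegeneracyIdeal A p (e + 1)) ∧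
      ∀ (φ : FrobTwist A p 1 →ₗ[A] A) (a : A), a ∈ frobDegeneracyIdeal A p (e + 1) →
        φ (FrobTwist.of a) ∈ frobDegeneracyIdeal A p e := by
  constructor
  · rw [Ideal.span_le]
    rintro _ ⟨x, hx, rfl⟩
    intro ψ
    have h := hx (FrobTwist.postFrob e ψ)
    simpa [FrobTwist.postFrob, frobenius_def] using h
  · intro φ a ha ψ
    have h := ha (FrobTwist.compTwist e φ ψ)
    simpa [FrobTwist.compTwist] using h
end

section
/- Let A be a Noetherian integral domain with fraction field K, R a finite type A-algebra that is a domain, and M a finitely generated R-module. Suppose there is a surjective (R ⊗_A K)-linear map M ⊗_A K → (R ⊗_A K)^{⊕ n}. Then there exists 0 ≠ g ∈ A such that, setting B = A[1/g], there is a surjective (R ⊗_A B)-linear map M ⊗_A B → (R ⊗_A B)^{⊕ n} whose base change to K recovers the original surjection. -/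
/-!
As `R` is Noetherian, `M` is finitely presented, so `f` lifts, up to a denominator `s`, to an
`R`-linear map `φ : M → Rⁿ` whose localization is surjective. Since `Rⁿ` is finite, a single
denominator `t` kills the cokernel of `φ`. Over any localization inverting `s * t`, the map
`φ / s` is then a surjection compatible with `f`, and `s * t` is the image of some `0 ≠ g ∈ A`.
-/

open IsLocalizedModule

section

variable {R : Type*} [CommRing R] (S : Submonoid R)

lemma Module.Finite.exists_mem_forall_smul_mem {N : Type*} [AddCommMonoid N]
    [Module R N] [Module.Finite R N] (p : Submodule R N) (h : ∀ n, ∃ c ∈ S, c • n ∈ p) :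
    ∃ t ∈ S, ∀ n, t • n ∈ p := by
  classical
  obtain ⟨σ, hσ⟩ := Module.Finite.fg_top (R := R) (M := N)
  choose c hcS hc using h
  refine ⟨∏ x ∈ σ, c x, prod_mem fun x _ => hcS x, fun n => ?_⟩
  have hspan : Submodule.span R σ ≤ p.comap ((∏ x ∈ σ, c x) • LinearMap.id) := by
    rw [Submodule.span_le]
    intro x hx
    rw [SetLike.mem_coe, Submodule.mem_comap, LinearMap.smul_apply, LinearMap.id_apply,
      ← Finset.prod_erase_mul _ _ hx, mul_smul]
    exact p.smul_mem _ (hc x)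
  exact hspan (hσ ▸ Submodule.mem_top)

variable {M M' N N' : Type*} [AddCommMonoid M] [Module R M] [AddCommMonoid M'] [Module R M']
  [AddCommMonoid N] [Module R N] [AddCommMonoid N'] [Module R N']
  (f : M →ₗ[R] M') (g : N →ₗ[R] N') [IsLocalizedModule S f] [IsLocalizedModule S g]

lemma IsLocalizedModule.exists_mem_smul_mem_range_of_surjective_map [Module.Finite R N]
    {φ : M →ₗ[R] N} (hφ : Function.Surjective (map S f g φ)) :
    ∃ t ∈ S, ∀ n, t • n ∈ LinearMap.range φ := by
  refine Module.Finite.exists_mem_forall_smul_mem S (LinearMap.range φ) fun n => ?_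
  obtain ⟨x, hx⟩ := hφ (g n)
  obtain ⟨⟨m, c⟩, rfl⟩ := mk'_surjective S f x
  rw [Function.uncurry_apply_pair, map_mk', mk'_eq_iff, ← LinearMap.map_smul_of_tower] at hx
  obtain ⟨d, hd⟩ := exists_of_eq (S := S) hx
  exact ⟨d * c, (d * c).2, d • m, by rw [LinearMap.map_smul_of_tower, hd, mul_smul]; rfl⟩

lemma IsLocalizedModule.map_surjective_of_smul_mem_range {φ : M →ₗ[R] N} {t : R} (ht : t ∈ S)
    (h : ∀ n, t • n ∈ LinearMap.range φ) : Function.Surjective (map S f g φ) := by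
  intro y
  obtain ⟨⟨n, c⟩, rfl⟩ := mk'_surjective S g y
  obtain ⟨m, hm⟩ := h n
  refine ⟨mk' f m (⟨t, ht⟩ * c), ?_⟩
  rw [map_mk', hm, Function.uncurry_apply_pair]
  exact mk'_cancel_left g n ⟨t, ht⟩ c

end

section

variable {R : Type*} [CommRing R]

abbrev Localization.piAlgebraMap (S : Submonoid R) (ι : Type*) :
    (ι → R) →ₗ[R] (ι → Localization S) :=
  LinearMap.pi fun i => Algebra.linearMap R (Localization S) ∘ₗ LinearMap.proj i

variable {M : Type*} [AddCommGroup M] [Module R M] [Module.FinitePresentation R M]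
  {ι : Type*} [Finite ι]

theorem Module.FinitePresentation.exists_descent_of_surjective_pi (T : Submonoid R)
    (f : LocalizedModule T M →ₗ[Localization T] (ι → Localization T))
    (hf : Function.Surjective f) :
    ∃ s ∈ T, ∀ (P : Submonoid R) (hPT : P ≤ T), s ∈ P →
      ∃ f' : LocalizedModule P M →ₗ[Localization P] (ι → Localization P),
        Function.Surjective f' ∧
        ∀ (m : M) (i : ι),
          IsLocalization.map (Localization T) (RingHom.id R) hPT (f' (LocalizedModule.mk m 1) i) =
            f (LocalizedModule.mk m 1) i := by
  obtain ⟨φ, s, hφ, hφ_surj⟩ := Module.exists_localizedMap_surjective_of_surjective T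
    (LocalizedModule.mkLinearMap T M) (Localization.piAlgebraMap T ι)
    (ϕ := f.restrictScalars R) hf
  obtain ⟨t, htT, ht⟩ := exists_mem_smul_mem_range_of_surjective_map T _ _ hφ_surj
  refine ⟨s * t, mul_mem s.2 htT, fun P hPT hst => ?_⟩
  have hs : IsUnit (algebraMap R (Localization P) s) :=
    isUnit_of_dvd_unit (map_dvd _ (dvd_mul_right _ _)) (IsLocalization.map_units _ ⟨_, hst⟩)
  have hφP : Function.Surjective (mapExtendScalars P (LocalizedModule.mkLinearMap P M)
      (Localization.piAlgebraMap P ι) (Localization P) φ) :=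
    map_surjective_of_smul_mem_range P _ _ hst fun n => by
      rw [mul_smul]; exact (LinearMap.range φ).smul_mem _ (ht n)
  refine ⟨(hs.unit⁻¹ : (Localization P)ˣ) •
      mapExtendScalars P (LocalizedModule.mkLinearMap P M) (Localization.piAlgebraMap P ι)
        (Localization P) φ, ?_, fun m i => ?_⟩
  · intro y
    obtain ⟨x, hx⟩ := hφP (hs.unit • y)
    exact ⟨x, by rw [LinearMap.smul_apply, hx, inv_smul_smul]⟩
  · have hT : algebraMap R (Localization T) (φ m i) = s • f (LocalizedModule.mk m 1) i := by
      have := congr_fun (LinearMap.congr_fun hφ (LocalizedModule.mkLinearMap T M m)) i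
      rwa [map_apply] at this
    have hP : mapExtendScalars P (LocalizedModule.mkLinearMap P M) (Localization.piAlgebraMap P ι)
        (Localization P) φ (LocalizedModule.mk m 1) i = algebraMap R (Localization P) (φ m i) :=
      congr_fun (map_apply P _ _ φ m) i
    set ψ := IsLocalization.map (Localization T) (RingHom.id R) hPT (S := Localization P)
    have hψ : ∀ r, ψ (algebraMap R (Localization P) r) = algebraMap R (Localization T) r :=
      IsLocalization.map_eq hPT
    apply (IsLocalization.map_units (Localization T) s).mul_left_cancel
    rw [LinearMap.smul_apply, Pi.smul_apply, Units.smul_def, hP, smul_eq_mul]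
    calc algebraMap R _ s * ψ (↑hs.unit⁻¹ * algebraMap R _ (φ m i))
        = ψ (algebraMap R _ s * ↑hs.unit⁻¹ * algebraMap R _ (φ m i)) := by
          rw [map_mul, map_mul, map_mul, hψ, hψ, mul_assoc]
      _ = algebraMap R _ s * f (LocalizedModule.mk m 1) i := by
          rw [hs.mul_val_inv, one_mul, hψ, hT, Submonoid.smul_def, Algebra.smul_def]

end

/-- Let `A` be a Noetherian domain with fraction field `K`, `R` a finite type
`A`-algebra which is a domain, and `M` a finitely generated `R`-module.  A surjection
`M ⊗_A K → (R ⊗_A K)^n` over the generic fiber `R ⊗_A K` (realized as the localization of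
`R`, resp. of `M`, at the image `T` of `A ∖ {0}`) spreads out: there is `0 ≠ g ∈ A` such
that, over `B = A[1/g]` (realized as the localization at the image of the powers of `g`),
there is a surjection `M ⊗_A B → (R ⊗_A B)^n` whose base change to `K` recovers the
original surjection. -/
theorem spread_out_surjection_from_generic_fiber
    (A : Type*) [CommRing A] [IsDomain A] [IsNoetherianRing A]
    (R : Type*) [CommRing R] [Algebra A R] [Algebra.FiniteType A R]
    (M : Type*) [AddCommGroup M] [Module R M] [Module.Finite R M] (n : ℕ)
    (f : LocalizedModule (Submonoid.map (algebraMap A R) (nonZeroDivisors A)) M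
      →ₗ[Localization (Submonoid.map (algebraMap A R) (nonZeroDivisors A))]
        (Fin n → Localization (Submonoid.map (algebraMap A R) (nonZeroDivisors A))))
    (hf : Function.Surjective f) :
    ∃ (g : A) (hg : g ≠ 0),
      ∃ f' : LocalizedModule (Submonoid.map (algebraMap A R) (Submonoid.powers g)) M
        →ₗ[Localization (Submonoid.map (algebraMap A R) (Submonoid.powers g))]
          (Fin n → Localization (Submonoid.map (algebraMap A R) (Submonoid.powers g))),
        Function.Surjective f' ∧
        ∀ (m : M) (i : Fin n),
          IsLocalization.map
            (M := Submonoid.map (algebraMap A R) (Submonoid.powers g))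
            (T := Submonoid.map (algebraMap A R) (nonZeroDivisors A))
            (Localization (Submonoid.map (algebraMap A R) (nonZeroDivisors A)))
            (RingHom.id R)
            (by
              rintro x ⟨a, ha, rfl⟩
              obtain ⟨k, rfl⟩ := ha
              exact ⟨g ^ k,
                pow_mem (mem_nonZeroDivisors_of_ne_zero hg) k, rfl⟩)
            (f' (LocalizedModule.mk m 1) i) =
          f (LocalizedModule.mk m 1) i := by
  have : IsNoetherianRing R := Algebra.FiniteType.isNoetherianRing A R
  have : Module.FinitePresentation R M := Module.finitePresentation_of_finite R M
  obtain ⟨_, ⟨a, ha, rfl⟩, hspread⟩ :=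
    Module.FinitePresentation.exists_descent_of_surjective_pi _ f hf
  have hle : Submonoid.map (algebraMap A R) (Submonoid.powers a)
      ≤ Submonoid.map (algebraMap A R) (nonZeroDivisors A) :=
    Submonoid.monotone_map (Submonoid.powers_le.mpr ha)
  exact ⟨a, nonZeroDivisors.ne_zero ha,
    hspread _ hle (Submonoid.mem_map_of_mem _ (Submonoid.mem_powers a))⟩
end
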